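/- arXiv:2507.07121 — 11 statements merged into one kernel-verified Lean document; each statement's English description precedes it below -/
import Mathlib

section
/- Let n ≥ 2 be a natural number. There is no unitary map (complex-linear isometric equivalence) U : EuclideanSpace ℂ (Fin n × Fin n) ≃ₗᵢ[ℂ] EuclideanSpace ℂ (Fin n × Fin n) together with a unit vector φ ∈ EuclideanSpace ℂ (Fin n) such that U (ψ ⊗ φ) = ψ ⊗ ψ for every unit vector ψ ∈ EuclideanSpace ℂ (Fin n). (No-cloning theorem.) -/
/-! A linear map is odd, whereas cloning `ψ ↦ ψ ⊗ ψ` is even. Cloning both `φ` and `-φ` therefore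
gives `φ ⊗ φ = U (φ ⊗ φ) = -U ((-φ) ⊗ φ) = -(φ ⊗ φ)`, so `φ ⊗ φ = 0`, which forces `φ = 0`. -/

/-- The tensor product of two vectors in `EuclideanSpace ℂ (Fin n)`, given by
`(ψ ⊗ φ)(i, j) = ψ i * φ j`. -/
noncomputable def tensorProd {n : ℕ} (ψ φ : EuclideanSpace ℂ (Fin n)) :
    EuclideanSpace ℂ (Fin n × Fin n) :=
  WithLp.toLp 2 (fun p : Fin n × Fin n => ψ p.1 * φ p.2)

section TensorProd

variable {n : ℕ}

@[simp]
theorem tensorProd_apply (ψ φ : EuclideanSpace ℂ (Fin n)) (p : Fin n × Fin n) :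
    tensorProd ψ φ p = ψ p.1 * φ p.2 :=
  rfl

@[simp]
theorem tensorProd_neg_left (ψ φ : EuclideanSpace ℂ (Fin n)) :
    tensorProd (-ψ) φ = -tensorProd ψ φ := by
  ext p
  simp

@[simp]
theorem tensorProd_neg_right (ψ φ : EuclideanSpace ℂ (Fin n)) :
    tensorProd ψ (-φ) = -tensorProd ψ φ := by
  ext p
  simp

theorem tensorProd_self_eq_zero_iff {ψ : EuclideanSpace ℂ (Fin n)} :
    tensorProd ψ ψ = 0 ↔ ψ = 0 := by
  refine ⟨fun h => ?_, fun h => by ext p; simp [h]⟩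
  ext i
  simpa using congrArg (fun v => v (i, i)) h

end TensorProd

theorem no_cloning_general (n : ℕ) :
    ¬ ∃ (U : EuclideanSpace ℂ (Fin n × Fin n) ≃ₗᵢ[ℂ] EuclideanSpace ℂ (Fin n × Fin n))
        (φ : EuclideanSpace ℂ (Fin n)), ‖φ‖ = 1 ∧
        ∀ ψ : EuclideanSpace ℂ (Fin n), ‖ψ‖ = 1 → U (tensorProd ψ φ) = tensorProd ψ ψ := by
  rintro ⟨U, φ, hφ, hU⟩
  have hclone_neg : -tensorProd φ φ = tensorProd φ φ := by
    simpa [hU φ hφ] using hU (-φ) (by rwa [norm_neg])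
  have := IsAddTorsionFree.of_module_rat (M := EuclideanSpace ℂ (Fin n × Fin n))
  have hφ_zero : φ = 0 := tensorProd_self_eq_zero_iff.mp (neg_eq_self.mp hclone_neg)
  simp [hφ_zero] at hφ

/-- **No-cloning theorem.** For `n ≥ 2`, there is no unitary map
`U : EuclideanSpace ℂ (Fin n × Fin n) ≃ₗᵢ[ℂ] EuclideanSpace ℂ (Fin n × Fin n)` together with a
unit vector `φ` such that `U (ψ ⊗ φ) = ψ ⊗ ψ` for every unit vector `ψ`. -/
theorem no_cloning (n : ℕ) (hn : 2 ≤ n) :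
    ¬ ∃ (U : EuclideanSpace ℂ (Fin n × Fin n) ≃ₗᵢ[ℂ] EuclideanSpace ℂ (Fin n × Fin n))
        (φ : EuclideanSpace ℂ (Fin n)), ‖φ‖ = 1 ∧
        ∀ ψ : EuclideanSpace ℂ (Fin n), ‖ψ‖ = 1 → U (tensorProd ψ φ) = tensorProd ψ ψ :=
  no_cloning_general n
end

section
/- Let k, ℓ be natural numbers with ℓ ≤ k, and let S : Fin ℓ → Matrix (Fin (2^k)) (Fin (2^k)) ℂ be matrices such that (i) (S i)^2 = 1 for every i, (ii) S i * S j = S j * S i for all i, j, and (iii) for every nonempty subset T of Fin ℓ, the trace of ∏_{i ∈ T} S i equals 0. Then the complex dimension (Module.finrank) of the joint fixed subspace {v : Fin (2^k) → ℂ | ∀ i, (S i).mulVec v = v} equals 2^(k − ℓ). -/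
/-! The operator `P = 2⁻ˡ ∏ᵢ (1 + Sᵢ)` is a projection onto the joint fixed space: each `Sᵢ` is
absorbed by the product because `Sᵢ (1 + Sᵢ) = 1 + Sᵢ`, and the product acts as `2ˡ` on fixed
vectors. Hence `tr P` is the dimension of that space. Expanding the product,
`tr P = 2⁻ˡ ∑_T tr (∏_{i ∈ T} Sᵢ)`, and only `T = ∅` survives, giving `2⁻ˡ · 2ᵏ`. -/

open Finset Function Module

variable {ι R M K V : Type*}

theorem Commute.one_add_one_add [Semiring R] {a b : R} (h : Commute a b) :
    Commute (1 + a) (1 + b) :=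
  (Commute.one_right _).add_right ((Commute.one_left b).add_left h)

theorem Pairwise.commute_one_add [Semiring R] {f : ι → R} (hf : Pairwise (Commute on f)) :
    Pairwise (Commute on fun i => 1 + f i) :=
  hf.mono fun _ _ h => h.one_add_one_add

namespace Finset

variable [Semiring R] {f : ι → R} (hf : Pairwise (Commute on f))

theorem noncommProd_one_add (s : Finset ι) :
    s.noncommProd (fun i => 1 + f i) (hf.commute_one_add.set_pairwise s) =
      ∑ t ∈ s.powerset, t.noncommProd f (hf.set_pairwise t) := by
  classical
  induction s using Finset.induction_on with
  | empty => simp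
  | insert a s ha ih =>
    rw [noncommProd_insert_of_notMem _ _ _ _ ha, ih, sum_powerset_insert ha, add_mul, one_mul,
      mul_sum]
    congr 1
    refine sum_congr rfl fun t ht => ?_
    rw [noncommProd_insert_of_notMem _ _ _ _ fun hat => ha (mem_powerset.mp ht hat)]

theorem mul_noncommProd_one_add_of_mem {s : Finset ι} {i : ι} (hi : i ∈ s) (hsq : f i * f i = 1) :
    f i * s.noncommProd (fun i => 1 + f i) (hf.commute_one_add.set_pairwise s) =
      s.noncommProd (fun i => 1 + f i) (hf.commute_one_add.set_pairwise s) := by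
  classical
  rw [← mul_noncommProd_erase s hi, ← mul_assoc, mul_add, mul_one, hsq, add_comm]

theorem noncommProd_one_add_smul_of_forall_smul_eq [AddCommMonoid M] [Module R M]
    (s : Finset ι) {v : M} (hv : ∀ i ∈ s, f i • v = v) :
    s.noncommProd (fun i => 1 + f i) (hf.commute_one_add.set_pairwise s) • v = 2 ^ #s • v := by
  classical
  induction s using Finset.induction_on with
  | empty => simp
  | insert a s ha ih =>
    rw [noncommProd_insert_of_notMem _ _ _ _ ha, mul_smul,
      ih fun i hi => hv i (mem_insert_of_mem hi),
      smul_comm, add_smul, one_smul, hv a (mem_insert_self a s), ← two_nsmul, smul_smul,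
      card_insert_of_notMem ha, pow_succ]

end Finset

namespace Module.End

variable [Field K] [NeZero (2 : K)] [AddCommGroup V] [Module K V] [Fintype ι]
  {σ : ι → End K V} (hσ : Pairwise (Commute on σ))

theorem isProj_iInf_ker_sub_one (hsq : ∀ i, σ i * σ i = 1) :
    LinearMap.IsProj (⨅ i, LinearMap.ker (σ i - 1)) ((2 ^ Fintype.card ι : K)⁻¹ •
      univ.noncommProd (fun i => 1 + σ i) (hσ.commute_one_add.set_pairwise _)) := by
  have mem_iff (v : V) : v ∈ ⨅ i, LinearMap.ker (σ i - 1) ↔ ∀ i, σ i v = v := by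
    simp only [Submodule.mem_iInf, LinearMap.mem_ker, LinearMap.sub_apply, one_apply, sub_eq_zero]
  refine ⟨fun v => (mem_iff _).2 fun i => ?_, fun v hv => ?_⟩
  · rw [LinearMap.smul_apply, map_smul, ← mul_apply,
      mul_noncommProd_one_add_of_mem hσ (mem_univ i) (hsq i)]
  · have hQv := noncommProd_one_add_smul_of_forall_smul_eq hσ univ fun i _ => (mem_iff v).1 hv i
    rw [Module.End.smul_def] at hQv
    rw [LinearMap.smul_apply, hQv, card_univ, ← Nat.cast_smul_eq_nsmul K, smul_smul, Nat.cast_pow,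
      Nat.cast_ofNat, inv_mul_cancel₀ (pow_ne_zero _ two_ne_zero), one_smul]

theorem finrank_iInf_ker_sub_one [FiniteDimensional K V] (hsq : ∀ i, σ i * σ i = 1) :
    (finrank K ↥(⨅ i, LinearMap.ker (σ i - 1)) : K) =
      (2 ^ Fintype.card ι : K)⁻¹ *
        ∑ t : Finset ι, LinearMap.trace K V (t.noncommProd σ (hσ.set_pairwise t)) := by
  rw [← (isProj_iInf_ker_sub_one hσ hsq).trace, map_smul, noncommProd_one_add hσ, powerset_univ,
    map_sum, smul_eq_mul]

end Module.End

/-- Abstract stabilizer dimension count: if `S : Fin ℓ → Matrix (Fin (2^k)) (Fin (2^k)) ℂ`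
are pairwise commuting involutions such that every nonempty product of distinct `S i` has
trace zero, then the joint fixed subspace `{v | ∀ i, (S i).mulVec v = v}` has complex
dimension `2^(k - ℓ)`. -/
theorem stabilizer_code_space_dim (k ℓ : ℕ) (hℓ : ℓ ≤ k)
    (S : Fin ℓ → Matrix (Fin (2 ^ k)) (Fin (2 ^ k)) ℂ)
    (hsq : ∀ i, S i * S i = 1)
    (hcomm : ∀ i j, S i * S j = S j * S i)
    (htr : ∀ T : Finset (Fin ℓ), T.Nonempty →
      Matrix.trace (T.noncommProd S (fun i _ j _ _ => hcomm i j)) = 0) :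
    Module.finrank ℂ
      ↥(⨅ i, LinearMap.ker ((Matrix.mulVecLin (S i)) - LinearMap.id)) = 2 ^ (k - ℓ) := by
  let σ i := Matrix.toLinAlgEquiv' (S i)
  have hσsq (i : Fin ℓ) : σ i * σ i = 1 := by rw [← map_mul, hsq, map_one]
  have hσ : Pairwise (Commute on σ) := fun i j _ => Commute.map (hcomm i j) _
  have htrace_sum :
      ∑ t : Finset (Fin ℓ), LinearMap.trace ℂ _ (t.noncommProd σ (hσ.set_pairwise t)) = 2 ^ k := by
    rw [sum_eq_single ∅ (fun t _ ht => ?_) (by simp)]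
    · simp
    · rw [← map_noncommProd _ _ fun i _ j _ _ => hcomm i j]
      exact (Matrix.trace_toLin'_eq _).trans (htr t (nonempty_iff_ne_empty.mpr ht))
  have hdim := Module.End.finrank_iInf_ker_sub_one hσ hσsq
  rw [htrace_sum, Fintype.card_fin, show (2 : ℂ) ^ k = 2 ^ ℓ * 2 ^ (k - ℓ) by
    rw [← pow_add, Nat.add_sub_cancel' hℓ], inv_mul_cancel_left₀ (by simp)] at hdim
  exact Nat.cast_injective (R := ℂ) (hdim.trans (by norm_cast))
end

section
/- Let G be a group and ε ∈ G a central element with ε^2 = 1 and ε ≠ 1. Let S : Fin ℓ → G have pairwise commuting values. Suppose E, F ∈ G and α, β : Fin ℓ → ZMod 2 satisfy E * S i = ε^(α i) * (S i * E) and F * S i = ε^(β i) * (S i * F) for every i. If there exists an element T of the subgroup of G generated by {S i | i : Fin ℓ} such that (E * F) * T = ε * (T * (E * F)), then α ≠ β. -/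
/-- Error-correction condition of the stabilizer formalism: if the errors `E` and `F` have
syndromes `α` and `β` with respect to the commuting generators `S i` (in the sense that
`E * S i = ε^(α i) * (S i * E)` and `F * S i = ε^(β i) * (S i * F)`, where `ε` is a central
element of order two), and `E * F` anticommutes with some element of the subgroup generated
by the `S i`, then `α ≠ β`. -/
theorem distinct_syndromes {G : Type*} [Group G] {ℓ : ℕ} (ε : G)
    (hcen : ∀ g : G, ε * g = g * ε) (hε2 : ε ^ 2 = 1) (hε1 : ε ≠ 1)
    (S : Fin ℓ → G) (hcomm : ∀ i j, Commute (S i) (S j))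
    (E F : G) (α β : Fin ℓ → ZMod 2)
    (hE : ∀ i, E * S i = ε ^ (α i).val * (S i * E))
    (hF : ∀ i, F * S i = ε ^ (β i).val * (S i * F))
    (hT : ∃ T ∈ Subgroup.closure (Set.range S), (E * F) * T = ε * (T * (E * F))) :
    α ≠ β := by
  intro hab
  subst hab
  obtain ⟨T, hTmem, hTanti⟩ := hT
  have hcenpow : ∀ (k : ℕ) (g : G), ε ^ k * g = g * ε ^ k := by
    intro k g
    have h : Commute ε g := hcen g
    exact (h.pow_left k).eq
  have hgen : ∀ x ∈ Set.range S, Commute (E * F) x := by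
    rintro x ⟨i, rfl⟩
    show (E * F) * S i = S i * (E * F)
    calc (E * F) * S i = E * (ε ^ (α i).val * (S i * F)) := by rw [mul_assoc, hF i]
      _ = ε ^ (α i).val * (E * S i) * F := by
          rw [← mul_assoc E, ← hcenpow]; group
      _ = ε ^ (α i).val * (ε ^ (α i).val * (S i * E)) * F := by rw [hE i]
      _ = (ε ^ 2) ^ (α i).val * (S i * (E * F)) := by
          rw [← mul_assoc, ← pow_add, ← two_mul, pow_mul]
          group
      _ = S i * (E * F) := by rw [hε2, one_pow, one_mul]
  have hle : Subgroup.closure (Set.range S) ≤ Subgroup.centralizer {E * F} := by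
    rw [Subgroup.closure_le]
    intro x hx
    exact Subgroup.mem_centralizer_iff.mpr (by simpa using (hgen x hx).eq)
  have hc : (E * F) * T = T * (E * F) :=
    Subgroup.mem_centralizer_iff.mp (hle hTmem) (E * F) rfl
  rw [hc] at hTanti
  have : (1 : G) * (T * (E * F)) = ε * (T * (E * F)) := by simpa using hTanti
  exact hε1 (mul_right_cancel this).symm
end

section
/- Let G be a group together with a central element ε ∈ G satisfying ε^2 = 1 and ε ≠ 1, such that for all g, h ∈ G either g * h = h * g or g * h = ε * (h * g). Let S be a subgroup of G with ε ∉ S. Then the normalizer of S in G equals the centralizer of S in G. -/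
/-!
If `g` normalizes `S` and `s ∈ S`, the commutator `⁅g, s⁆ = (g s g⁻¹) s⁻¹` lies in `S`. Were `g` and
`s` to anticommute, this commutator would be `ε ∉ S`; so every element of the normalizer commutes
with every element of `S`.
-/

open scoped commutatorElement

section

variable {G : Type*} [Group G]

theorem Subgroup.commutatorElement_mem_of_mem_normalizer {S : Subgroup G} {g s : G}
    (hg : g ∈ normalizer (S : Set G)) (hs : s ∈ S) : ⁅g, s⁆ ∈ S := by
  rw [commutatorElement_def]
  exact S.mul_mem ((mem_normalizer_iff.1 hg s).1 hs) (S.inv_mem hs)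

theorem commutatorElement_eq_of_mul_eq_mul_mul {ε g s : G} (h : g * s = ε * (s * g)) :
    ⁅g, s⁆ = ε := by
  rw [commutatorElement_def, h]
  group

end

theorem normalizer_eq_centralizer_general {G : Type*} [Group G] (ε : G)
    (hanti : ∀ g h : G, g * h = h * g ∨ g * h = ε * (h * g))
    (S : Subgroup G) (hS : ε ∉ S) :
    Subgroup.normalizer (S : Set G) = Subgroup.centralizer (S : Set G) := by
  refine le_antisymm (fun g hg => Subgroup.mem_centralizer_iff.2 fun s hs => ?_)
    (Subgroup.centralizer_le_normalizer _)
  rcases hanti g s with hcomm | hanticomm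
  · exact hcomm.symm
  · have hmem := Subgroup.commutatorElement_mem_of_mem_normalizer hg hs
    rw [commutatorElement_eq_of_mul_eq_mul_mul hanticomm] at hmem
    exact absurd hmem hS

/-- In an "anticommuting-pair group" `(G, ε)` (where `ε` is central of order two and any two
elements either commute or anticommute up to `ε`), the normalizer of a subgroup `S` not
containing `ε` equals its centralizer. -/
theorem normalizer_eq_centralizer {G : Type*} [Group G] (ε : G)
    (hcen : ∀ g : G, ε * g = g * ε) (hε2 : ε ^ 2 = 1) (hε1 : ε ≠ 1)
    (hanti : ∀ g h : G, g * h = h * g ∨ g * h = ε * (h * g))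
    (S : Subgroup G) (hS : ε ∉ S) :
    Subgroup.normalizer (S : Set G) = Subgroup.centralizer (S : Set G) :=
  normalizer_eq_centralizer_general ε hanti S hS
end

section
/- Let G be a group together with a central element ε ∈ G satisfying ε^2 = 1 and ε ≠ 1, such that for all g, h ∈ G either g * h = h * g or g * h = ε * (h * g). Let S be a commutative subgroup of G with ε ∉ S (a stabilizer subgroup). Then S is a normal subgroup of its normalizer N_G(S), and N_G(S) is a normal subgroup of G. -/
namespace Subgroup

variable {G : Type*} [Group G]

theorem normal_of_center_le_of_commutator_mem_center
    (hcomm : ∀ g k : G, k * g * k⁻¹ * g⁻¹ ∈ center G) {H : Subgroup G} (hH : center G ≤ H) :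
    H.Normal where
  conj_mem g hg k := by
    simpa using H.mul_mem (hH (hcomm g k)) hg

theorem commutator_mem_center_of_anticommuting_pair {ε : G} (hcen : ∀ g : G, ε * g = g * ε)
    (hanti : ∀ g h : G, g * h = h * g ∨ g * h = ε * (h * g)) (g k : G) :
    k * g * k⁻¹ * g⁻¹ ∈ center G := by
  rcases hanti k g with hkg | hkg
  · rw [hkg, mul_inv_cancel_right, mul_inv_cancel]
    exact one_mem _
  · rw [hkg, mul_assoc ε, mul_inv_cancel_right, mul_inv_cancel_right]
    exact mem_center_iff.mpr fun g => (hcen g).symm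

end Subgroup

theorem stabilizer_normal_in_normalizer_and_normalizer_normal_general {G : Type*} [Group G] (ε : G)
    (hcen : ∀ g : G, ε * g = g * ε)
    (hanti : ∀ g h : G, g * h = h * g ∨ g * h = ε * (h * g))
    (S : Subgroup G) :
    (S.subgroupOf (Subgroup.normalizer (S : Set G))).Normal ∧ (Subgroup.normalizer (S : Set G)).Normal :=
  ⟨Subgroup.normal_in_normalizer,
    Subgroup.normal_of_center_le_of_commutator_mem_center
      (Subgroup.commutator_mem_center_of_anticommuting_pair hcen hanti)
      (Subgroup.center_le_normalizer _)⟩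

/-- In an "anticommuting-pair group" `(G, ε)`, a stabilizer subgroup `S` (a commutative
subgroup with `ε ∉ S`) is normal in its normalizer, and its normalizer is normal in `G`. -/
theorem stabilizer_normal_in_normalizer_and_normalizer_normal {G : Type*} [Group G] (ε : G)
    (hcen : ∀ g : G, ε * g = g * ε) (hε2 : ε ^ 2 = 1) (hε1 : ε ≠ 1)
    (hanti : ∀ g h : G, g * h = h * g ∨ g * h = ε * (h * g))
    (S : Subgroup G) (hScomm : ∀ a ∈ S, ∀ b ∈ S, a * b = b * a) (hS : ε ∉ S) :
    (S.subgroupOf (Subgroup.normalizer (S : Set G))).Normal ∧ (Subgroup.normalizer (S : Set G)).Normal :=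
  stabilizer_normal_in_normalizer_and_normalizer_normal_general ε hcen hanti S
end

section
/- Let G be a group, N m : ℕ, and φ : G → (Fin N → ZMod 2) a function satisfying φ (g * h) = φ g + φ h for all g, h ∈ G. Let g : Fin m → G and suppose the subgroup of G generated by {g i | i : Fin m} meets the kernel of φ trivially: every element h of that subgroup with φ h = 0 equals 1. Then the following are equivalent: (a) for every j : Fin m, g j does not lie in the subgroup of G generated by {g i | i ≠ j}; (b) the family (fun i => φ (g i)) is linearly independent over ZMod 2. -/
/-- Correspondence underlying the parity-check description of stabilizer codes: given a
map `φ : G → (Fin N → ZMod 2)` with `φ (g * h) = φ g + φ h`, and a family `g : Fin m → G`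
generating a subgroup meeting the kernel of `φ` trivially, the `g j` are independent
generators (no `g j` lies in the subgroup generated by the others) iff the images
`φ (g i)` are linearly independent over `ZMod 2`. -/
theorem independent_generators_iff_linearIndependent {G : Type*} [Group G] (N m : ℕ)
    (φ : G → (Fin N → ZMod 2)) (hφ : ∀ g h : G, φ (g * h) = φ g + φ h)
    (g : Fin m → G)
    (hker : ∀ h ∈ Subgroup.closure (Set.range g), φ h = 0 → h = 1) :
    (∀ j : Fin m, g j ∉ Subgroup.closure (g '' {i | i ≠ j})) ↔
      LinearIndependent (ZMod 2) (fun i => φ (g i)) := by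
  have hφ1 : φ 1 = 0 := by
    have h := hφ 1 1
    rw [one_mul] at h
    exact (left_eq_add.mp h)
  have hinv : ∀ x : G, φ x⁻¹ = - φ x := by
    intro x
    have h := hφ x x⁻¹
    rw [mul_inv_cancel, hφ1] at h
    exact eq_neg_of_add_eq_zero_right h.symm
  have hspan : ∀ (s : Set G) (h : G), h ∈ Subgroup.closure s →
      φ h ∈ Submodule.span (ZMod 2) (φ '' s) := by
    intro s h hh
    induction hh using Subgroup.closure_induction with
    | mem x hx => exact Submodule.subset_span ⟨x, hx, rfl⟩
    | one => rw [hφ1]; exact Submodule.zero_mem _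
    | mul x y hx hy ihx ihy => rw [hφ x y]; exact Submodule.add_mem _ ihx ihy
    | inv x hx ih => rw [hinv]; exact Submodule.neg_mem _ ih
  have hlist : ∀ l : List G, φ l.prod = (l.map φ).sum := by
    intro l
    induction l with
    | nil => simpa using hφ1
    | cons a t ih => simp [hφ, ih]
  constructor
  · intro ha
    rw [Fintype.linearIndependent_iff]
    intro c hc j
    by_contra hcj
    have hv : ∀ x : ZMod 2, x = 0 ∨ x = 1 := by decide
    have hc1 : c j = 1 := (hv (c j)).resolve_left hcj
    classical
    set S : Finset (Fin m) := Finset.univ.filter (fun i => c i = 1) with hS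
    have hjS : j ∈ S := by simp [hS, hc1]
    have hsum : ∑ i ∈ S, φ (g i) = 0 := by
      rw [← hc, hS, Finset.sum_filter]
      apply Finset.sum_congr rfl
      intro i _
      rcases hv (c i) with h | h <;> simp [h]
    set l : List G := (S.erase j).toList.map g with hl
    have hmem : ∀ x ∈ l, x ∈ Set.range g ∧ ∃ i, i ≠ j ∧ g i = x := by
      intro x hx
      rw [hl] at hx
      simp only [List.mem_map, Finset.mem_toList, Finset.mem_erase] at hx
      obtain ⟨i, ⟨hij, _⟩, rfl⟩ := hx
      exact ⟨⟨i, rfl⟩, i, hij, rfl⟩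
    have hφl : φ l.prod = ∑ i ∈ S.erase j, φ (g i) := by
      rw [hlist, hl, List.map_map]
      exact Finset.sum_map_toList _ _
    have hφh : φ (g j * l.prod) = 0 := by
      rw [hφ, hφl, Finset.add_sum_erase S (fun i => φ (g i)) hjS, hsum]
    have hhmem : g j * l.prod ∈ Subgroup.closure (Set.range g) := by
      refine Subgroup.mul_mem _ (Subgroup.subset_closure ⟨j, rfl⟩) ?_
      exact list_prod_mem (fun x hx => Subgroup.subset_closure (hmem x hx).1)
    have h1 : g j * l.prod = 1 := hker _ hhmem hφh
    have hlmem : l.prod ∈ Subgroup.closure (g '' {i | i ≠ j}) := by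
      refine list_prod_mem (fun x hx => Subgroup.subset_closure ?_)
      obtain ⟨i, hij, rfl⟩ := (hmem x hx).2
      exact ⟨i, hij, rfl⟩
    have hgj : g j = l.prod⁻¹ := eq_inv_of_mul_eq_one_left h1
    exact ha j (hgj ▸ Subgroup.inv_mem _ hlmem)
  · intro hli j hj
    have h1 : φ (g j) ∈ Submodule.span (ZMod 2) ((fun i => φ (g i)) '' {i | i ≠ j}) := by
      have := hspan _ _ hj
      rwa [Set.image_image] at this
    exact hli.notMem_span_image (by simp : j ∉ {i | i ≠ j}) h1
end

section
/- For every n : ℕ and all p, q, r, s : Fin n → ZMod 2, the Pauli word matrices satisfy M(p,q) * M(r,s) = (-1)^(p·s + q·r) • (M(r,s) * M(p,q)), where (-1)^x means -1 if x = 1 and 1 if x = 0 in ZMod 2. In particular, M(p,q) and M(r,s) commute if and only if the symplectic product p·s + q·r equals 0 in ZMod 2. -/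
/-- The sign `(-1)^x` for `x : ZMod 2`: `-1` if `x = 1` and `1` if `x = 0`. -/
noncomputable def msign (x : ZMod 2) : ℂ := if x = 1 then -1 else 1

/-- The dot product `q · b = ∑ i, q i * b i` in `ZMod 2`. -/
def zdot {n : ℕ} (q b : Fin n → ZMod 2) : ZMod 2 := ∑ i, q i * b i

/-- The Pauli word matrix `M(p,q)`, representing `X^{p₁}Z^{q₁} ⊗ ⋯ ⊗ X^{pₙ}Z^{qₙ}`:
its `(a,b)` entry is `(-1)^(q·b)` if `a = b + p` and `0` otherwise. -/
noncomputable def pauliM {n : ℕ} (p q : Fin n → ZMod 2) :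
    Matrix (Fin n → ZMod 2) (Fin n → ZMod 2) ℂ :=
  fun a b => if a = b + p then msign (zdot q b) else 0

/-! Multiplying out, both `M(p,q) M(r,s)` and `M(r,s) M(p,q)` are supported on `a = b + p + r`,
with signs `(-1)^(q·(b+r) + s·b)` and `(-1)^(s·(b+p) + q·b)`. By bilinearity of the dot product
these differ by `(-1)^(q·r + s·p)`. Since the product is nonzero, commuting amounts to this sign
being `1`. -/

open Matrix

lemma zdot_eq_dotProduct {n : ℕ} (q b : Fin n → ZMod 2) : zdot q b = q ⬝ᵥ b := rfl

lemma zmod_two_eq_zero_or_eq_one (x : ZMod 2) : x = 0 ∨ x = 1 := by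
  revert x; decide

lemma msign_add (x y : ZMod 2) : msign (x + y) = msign x * msign y := by
  rcases zmod_two_eq_zero_or_eq_one x with rfl | rfl <;>
    rcases zmod_two_eq_zero_or_eq_one y with rfl | rfl <;> simp +decide [msign]

lemma msign_ne_zero (x : ZMod 2) : msign x ≠ 0 := by
  unfold msign; split_ifs <;> norm_num

lemma msign_eq_one_iff (x : ZMod 2) : msign x = 1 ↔ x = 0 := by
  rcases zmod_two_eq_zero_or_eq_one x with rfl | rfl <;> norm_num [msign]

lemma pauliM_mul_apply {n : ℕ} (p q r s a b : Fin n → ZMod 2) :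
    (pauliM p q * pauliM r s) a b =
      if a = b + r + p then msign (zdot q (b + r) + zdot s b) else 0 := by
  rw [mul_apply, Finset.sum_eq_single (b + r)]
  · simp [pauliM, msign_add]
  · intro c _ hc
    simp [pauliM, hc]
  · simp

lemma pauliM_mul_ne_zero {n : ℕ} (p q r s : Fin n → ZMod 2) : pauliM p q * pauliM r s ≠ 0 := by
  intro h
  have := congrFun (congrFun h (0 + r + p)) 0
  rw [pauliM_mul_apply, if_pos rfl] at this
  exact msign_ne_zero _ this

lemma pauliM_mul_pauliM_eq_smul {n : ℕ} (p q r s : Fin n → ZMod 2) :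
    pauliM p q * pauliM r s = msign (zdot p s + zdot q r) • (pauliM r s * pauliM p q) := by
  ext a b
  rw [Matrix.smul_apply, pauliM_mul_apply, pauliM_mul_apply, add_right_comm b p r, smul_eq_mul]
  split_ifs
  · simp only [zdot_eq_dotProduct, ← msign_add, dotProduct_add, dotProduct_comm p s]
    congr 1
    linear_combination -(s ⬝ᵥ p) * CharTwo.two_eq_zero (R := ZMod 2)
  · rw [mul_zero]

/-- Pauli words commute up to the sign given by the symplectic product:
`M(p,q) * M(r,s) = (-1)^(p·s + q·r) • (M(r,s) * M(p,q))`; in particular they commute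
iff the symplectic product `p·s + q·r` vanishes in `ZMod 2`. -/
theorem pauliM_mul_comm_symplectic (n : ℕ) (p q r s : Fin n → ZMod 2) :
    pauliM p q * pauliM r s = msign (zdot p s + zdot q r) • (pauliM r s * pauliM p q) ∧
      (pauliM p q * pauliM r s = pauliM r s * pauliM p q ↔ zdot p s + zdot q r = 0) := by
  have hcomm := pauliM_mul_pauliM_eq_smul p q r s
  refine ⟨hcomm, ?_⟩
  rw [hcomm]
  nth_rewrite 2 [← one_smul ℂ (pauliM r s * pauliM p q)]
  rw [smul_left_inj (pauliM_mul_ne_zero r s p q), msign_eq_one_iff]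
end

section
/- Let n, k : ℕ and let r : Fin k → ((Fin n → ZMod 2) × (Fin n → ZMod 2)), with r i = (p i, q i), be a family that is linearly independent over ZMod 2 and whose pairwise symplectic products vanish: (p i)·(q j) + (q i)·(p j) = 0 in ZMod 2 for all i, j. Then there exist scalars λ : Fin k → ℂ with each λ i ∈ ({1, -1, Complex.I, -Complex.I} : Set ℂ) such that the matrices T i := λ i • M(p i, q i) satisfy: (i) (T i)^2 = 1 for all i; (ii) T i * T j = T j * T i for all i, j; (iii) for every c : Fin k → ZMod 2, if ∏ i, (T i)^(c i) = 1 then c = 0; and (iv) for every c : Fin k → ZMod 2, ∏ i, (T i)^(c i) ≠ -1, where 1 denotes the identity matrix and (T i)^(c i) means T i when c i = 1 and the identity when c i = 0. -/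
/-!
Pauli words multiply up to a sign: `M(p,q) M(s,t) = (-1)^(q·s) M(p+s, q+t)`. So `T i * T j` and
`T j * T i` differ by `(-1)` to the symplectic product of the rows, and `T i ^ 2` is
`λ i ^ 2 (-1)^(q i · p i)`, which the phase `λ i = i^(q i · p i)` turns into `1`. Every product
`∏ T i ^ c i` is a nonzero multiple of `M(∑ c i p i, ∑ c i q i)`, and a multiple of `M(p,q)` is a
scalar matrix only if `p = q = 0`; if the product is `±1`, linear independence of the rows
gives `c = 0`, and the empty product is `1 ≠ -1`.
-/

open Matrix

lemma zmod_two_eq_zero_or_one : ∀ x : ZMod 2, x = 0 ∨ x = 1 := by decide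

lemma msign_mul_self (x : ZMod 2) : msign x * msign x = 1 := by
  rw [← msign_add, CharTwo.add_self_eq_zero, msign_eq_one_iff]

noncomputable def pauliPhase (x : ZMod 2) : ℂ := if x = 1 then Complex.I else 1

lemma pauliPhase_mem (x : ZMod 2) :
    pauliPhase x ∈ ({1, -1, Complex.I, -Complex.I} : Set ℂ) := by
  unfold pauliPhase; split_ifs <;> simp

lemma pauliPhase_ne_zero (x : ZMod 2) : pauliPhase x ≠ 0 := by
  unfold pauliPhase; split_ifs <;> simp

lemma pauliPhase_mul_self (x : ZMod 2) : pauliPhase x * pauliPhase x = msign x := by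
  obtain rfl | rfl := zmod_two_eq_zero_or_one x <;> simp [pauliPhase, msign]

section Pauli

variable {n : ℕ}

lemma pauliM_zero : pauliM (0 : Fin n → ZMod 2) 0 = 1 := by
  ext a b
  simp [pauliM, one_apply, zdot, msign]

lemma pauliM_mul (p q s t : Fin n → ZMod 2) :
    pauliM p q * pauliM s t = msign (zdot q s) • pauliM (p + s) (q + t) := by
  ext a b
  simp only [mul_apply, pauliM, Matrix.smul_apply, smul_eq_mul]
  rw [Finset.sum_eq_single (b + s) (fun x _ hx => by rw [if_neg hx, mul_zero]) (by simp),
    if_pos rfl, add_assoc b s p, add_comm s p]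
  split_ifs
  · simp only [zdot_eq_dotProduct, dotProduct_add, add_dotProduct, msign_add]
    ring
  · ring

lemma smul_pauliM_mul_smul_pauliM (x y : ℂ) (p q s t : Fin n → ZMod 2) :
    (x • pauliM p q) * (y • pauliM s t) =
      (x * y * msign (zdot q s)) • pauliM (p + s) (q + t) := by
  rw [Matrix.smul_mul, Matrix.mul_smul, pauliM_mul, smul_smul, smul_smul, mul_assoc]

lemma commute_smul_pauliM (x y : ℂ) {p q s t : Fin n → ZMod 2}
    (h : zdot q s = zdot t p) : Commute (x • pauliM p q) (y • pauliM s t) := by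
  rw [Commute, SemiconjBy, smul_pauliM_mul_smul_pauliM, smul_pauliM_mul_smul_pauliM, h,
    add_comm s, add_comm t, mul_comm x]

lemma smul_pauliM_pow_val (μ : ℂ) (v : (Fin n → ZMod 2) × (Fin n → ZMod 2)) (c : ZMod 2) :
    (μ • pauliM v.1 v.2) ^ c.val = μ ^ c.val • pauliM (c • v).1 (c • v).2 := by
  obtain rfl | rfl := zmod_two_eq_zero_or_one c
  · simp [pauliM_zero]
  · simp [ZMod.val_one]

lemma exists_prod_ofFn_smul_pauliM {k : ℕ} (μ : Fin k → ℂ) (hμ : ∀ i, μ i ≠ 0)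
    (v : Fin k → (Fin n → ZMod 2) × (Fin n → ZMod 2)) :
    ∃ ν : ℂ, ν ≠ 0 ∧ (List.ofFn fun i => μ i • pauliM (v i).1 (v i).2).prod =
      ν • pauliM (∑ i, v i).1 (∑ i, v i).2 := by
  induction k with
  | zero => exact ⟨1, one_ne_zero, by simp [pauliM_zero]⟩
  | succ k ih =>
    obtain ⟨ν, hν, h⟩ := ih (fun i : Fin k => μ i.succ) (fun i => hμ i.succ) (fun i => v i.succ)
    refine ⟨μ 0 * ν * msign (zdot (v 0).2 (∑ i : Fin k, v i.succ).1),
      mul_ne_zero (mul_ne_zero (hμ 0) hν) (msign_ne_zero _), ?_⟩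
    rw [List.ofFn_succ, List.prod_cons, h, smul_pauliM_mul_smul_pauliM, Fin.sum_univ_succ]
    rfl

lemma eq_zero_of_smul_pauliM_eq_smul_one {μ ε : ℂ} (hμ : μ ≠ 0) {p q : Fin n → ZMod 2}
    (h : μ • pauliM p q = ε • 1) : p = 0 ∧ q = 0 := by
  have entry : ∀ a b, μ * (if a = b + p then msign (zdot q b) else 0) =
      ε * (if a = b then 1 else 0) := fun a b => by
    simpa [pauliM, one_apply, mul_ite] using congrFun₂ h a b
  have hp : p = 0 := by
    by_contra hp
    simpa [zdot, msign, hp, hμ] using entry p 0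
  subst hp
  have hdiag : ∀ b, μ * msign (zdot q b) = ε := fun b => by simpa using entry b b
  have hμε : μ = ε := by simpa [zdot, msign] using hdiag 0
  refine ⟨rfl, funext fun i => ?_⟩
  have := hdiag (Pi.single i 1)
  rw [← hμε, zdot_eq_dotProduct, dotProduct_single, mul_one] at this
  simpa [msign_eq_one_iff] using mul_left_cancel₀ hμ (this.trans (mul_one μ).symm)

end Pauli

/-- A full-rank parity check matrix over `ZMod 2` with vanishing pairwise symplectic
products of its rows defines a stabilizer subgroup: one can rescale the corresponding
Pauli words by phases `λ i ∈ {1, -1, i, -i}` so that the resulting matrices `T i` are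
self-inverse, pairwise commuting, independent (no nontrivial product equals the identity),
and generate a group not containing `-1`. -/
theorem parity_check_defines_stabilizer (n k : ℕ)
    (r : Fin k → ((Fin n → ZMod 2) × (Fin n → ZMod 2)))
    (hli : LinearIndependent (ZMod 2) r)
    (hsymp : ∀ i j, zdot (r i).1 (r j).2 + zdot (r i).2 (r j).1 = 0) :
    ∃ lam : Fin k → ℂ, (∀ i, lam i ∈ ({1, -1, Complex.I, -Complex.I} : Set ℂ)) ∧
      (∀ i, (lam i • pauliM (r i).1 (r i).2) * (lam i • pauliM (r i).1 (r i).2) = 1) ∧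
      (∀ i j, (lam i • pauliM (r i).1 (r i).2) * (lam j • pauliM (r j).1 (r j).2) =
        (lam j • pauliM (r j).1 (r j).2) * (lam i • pauliM (r i).1 (r i).2)) ∧
      (∀ c : Fin k → ZMod 2,
        (List.ofFn (fun i => (lam i • pauliM (r i).1 (r i).2) ^ (c i).val)).prod = 1 →
          c = 0) ∧
      (∀ c : Fin k → ZMod 2,
        (List.ofFn (fun i => (lam i • pauliM (r i).1 (r i).2) ^ (c i).val)).prod ≠ -1) := by
  set lam : Fin k → ℂ := fun i => pauliPhase (zdot (r i).2 (r i).1)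
  set T : Fin k → Matrix (Fin n → ZMod 2) (Fin n → ZMod 2) ℂ :=
    fun i => lam i • pauliM (r i).1 (r i).2
  have eq_zero_of_prod_eq_smul_one (c : Fin k → ZMod 2) (ε : ℂ)
      (h : (List.ofFn fun i => T i ^ (c i).val).prod = ε • 1) : c = 0 := by
    simp only [T, smul_pauliM_pow_val] at h
    obtain ⟨ν, hν, hprod⟩ := exists_prod_ofFn_smul_pauliM _
      (fun i => pow_ne_zero _ (pauliPhase_ne_zero _)) fun i => c i • r i
    obtain ⟨h1, h2⟩ := eq_zero_of_smul_pauliM_eq_smul_one hν (hprod ▸ h)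
    exact funext <| Fintype.linearIndependent_iff.mp hli c (Prod.ext h1 h2)
  refine ⟨lam, fun i => pauliPhase_mem _, fun i => ?_, fun i j => ?_,
    fun c h => eq_zero_of_prod_eq_smul_one c 1 (by rw [h, one_smul]), fun c h => ?_⟩
  · rw [smul_pauliM_mul_smul_pauliM, ZModModule.add_self, ZModModule.add_self,
      pauliM_zero, pauliPhase_mul_self, msign_mul_self, one_smul]
  · refine (commute_smul_pauliM _ _ ?_).eq
    rw [← CharTwo.add_eq_zero.mp (hsymp i j)]
    exact dotProduct_comm _ _
  · obtain rfl := eq_zero_of_prod_eq_smul_one c (-1) (by rw [h, neg_smul, one_smul])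
    simp only [Pi.zero_apply, ZMod.val_zero, pow_zero, List.ofFn_const, List.prod_replicate,
      one_pow] at h
    exact absurd (congrFun₂ h 0 0) (by norm_num)
end

section
/- Let F be a field and V a finite-dimensional vector space over F equipped with a bilinear form ω : V → V → F that is alternating (ω v v = 0 for all v ∈ V) and nondegenerate (if ω u v = 0 for all v ∈ V then u = 0). Then the dimension of V is even, say Module.finrank F V = 2 * n, and there exists a basis e₁, …, e_n, f₁, …, f_n of V such that ω (e i) (f j) = 1 if i = j and 0 otherwise, ω (e i) (e j) = 0, and ω (f i) (f j) = 0 for all i, j. -/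
/-!
By nondegeneracy every `u ≠ 0` has a partner `v` with `ω u v = 1`. The plane spanned by `u, v`
is nondegenerate, so `V` is the direct sum of this plane and its `ω`-orthogonal complement, on
which `ω` is again alternating and nondegenerate. Induction on the dimension yields a symplectic
family with `2 n = dim V` vectors; such a family is linearly independent, hence a basis.
-/

open Module Submodule

namespace LinearMap.BilinForm

section SymplecticFamily

variable {R M ι : Type*} [CommRing R] [AddCommGroup M] [Module R M] [DecidableEq ι]

structure IsSymplecticFamily (ω : LinearMap.BilinForm R M) (b : ι ⊕ ι → M) : Prop where
  inl_inr : ∀ i j, ω (b (.inl i)) (b (.inr j)) = if i = j then 1 else 0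
  inl_inl : ∀ i j, ω (b (.inl i)) (b (.inl j)) = 0
  inr_inr : ∀ i j, ω (b (.inr i)) (b (.inr j)) = 0

variable {ω : LinearMap.BilinForm R M} {b : ι ⊕ ι → M}

theorem IsSymplecticFamily.linearIndependent (hω : ω.IsAlt) (hb : IsSymplecticFamily ω b) :
    LinearIndependent R b := by
  -- pairing against `c` reads off the coefficients of a linear combination of `b`
  let c : ι ⊕ ι → M := Sum.elim (b ∘ .inr) (-(b ∘ .inl))
  have hc : ∀ x y, ω (b x) (c y) = if x = y then 1 else 0 := by
    rintro (i | i) (j | j) <;> simp [c, hb.inl_inr, hb.inl_inl, hb.inr_inr, hω.neg_eq, eq_comm]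
  rw [linearIndependent_iff']
  intro s g hg j hj
  simpa [map_sum, hc, hj] using congrArg (fun x => ω x (c j)) hg

theorem IsSymplecticFamily.subtype {W : Submodule R M} {b : ι ⊕ ι → W}
    (hb : IsSymplecticFamily (ω.restrict W) b) : IsSymplecticFamily ω (W.subtype ∘ b) :=
  ⟨hb.inl_inr, hb.inl_inl, hb.inr_inr⟩

theorem IsSymplecticFamily.cons {n : ℕ} {b : Fin n ⊕ Fin n → M} (hω : ω.IsAlt)
    (hb : IsSymplecticFamily ω b) {e f : M} (hef : ω e f = 1)
    (he : ∀ k, ω e (b k) = 0) (hf : ∀ k, ω f (b k) = 0) :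
    IsSymplecticFamily ω (Sum.elim (Fin.cons e (b ∘ .inl)) (Fin.cons f (b ∘ .inr))) := by
  have he' : ∀ k, ω (b k) e = 0 := fun k => hω.isRefl.eq_zero (he k)
  have hf' : ∀ k, ω (b k) f = 0 := fun k => hω.isRefl.eq_zero (hf k)
  constructor <;> intro i j <;> cases i using Fin.cases <;> cases j using Fin.cases <;>
    simp [hω.self_eq_zero, hef, he, hf, he', hf', hb.inl_inr, hb.inl_inl, hb.inr_inr,
      Fin.succ_ne_zero, (Fin.succ_ne_zero _).symm]

end SymplecticFamily

variable {K V : Type*} [Field K] [AddCommGroup V] [Module K V] {ω : LinearMap.BilinForm K V}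
  {u v : V}

theorem Nondegenerate.exists_apply_eq_one (hω : ω.Nondegenerate) (hu : u ≠ 0) :
    ∃ v, ω u v = 1 := by
  obtain ⟨w, hw⟩ : ∃ w, ω u w ≠ 0 := by
    by_contra! h
    exact hu (hω.1 u h)
  exact ⟨(ω u w)⁻¹ • w, by rw [map_smul, smul_eq_mul, inv_mul_cancel₀ hw]⟩

theorem IsAlt.eq_zero_of_apply_smul_add_smul (hω : ω.IsAlt) (huv : ω u v = 1) {s t : K}
    (hu : ω u (s • u + t • v) = 0) (hv : ω v (s • u + t • v) = 0) : s = 0 ∧ t = 0 := by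
  simp only [map_add, map_smul, smul_eq_mul, hω.self_eq_zero, huv, ← hω.neg_eq u v] at hu hv
  exact ⟨by linear_combination -hv, by linear_combination hu⟩

theorem IsAlt.finrank_span_pair (hω : ω.IsAlt) (huv : ω u v = 1) :
    finrank K (span K {u, v}) = 2 := by
  have hli : LinearIndependent K ![u, v] := LinearIndependent.pair_iff.mpr fun s t h =>
    hω.eq_zero_of_apply_smul_add_smul huv (by simp [h]) (by simp [h])
  rw [← Matrix.range_cons_cons_empty u v ![], finrank_span_eq_card hli, Fintype.card_fin]

theorem IsAlt.nondegenerate_restrict_span_pair (hω : ω.IsAlt) (huv : ω u v = 1) :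
    (ω.restrict (span K {u, v})).Nondegenerate := by
  refine ω.nondegenerate_restrict_of_disjoint_orthogonal hω.isRefl ?_
  rw [disjoint_iff_inf_le]
  rintro x ⟨hx, hxo⟩
  obtain ⟨s, t, rfl⟩ := mem_span_pair.mp hx
  obtain ⟨rfl, rfl⟩ := hω.eq_zero_of_apply_smul_add_smul huv
    (hxo u (subset_span (by simp))) (hxo v (subset_span (by simp)))
  simp

theorem nondegenerate_restrict_orthogonal [FiniteDimensional K V]
    (hω : ω.IsRefl) (hnd : ω.Nondegenerate) {W : Submodule K V}
    (hW : (ω.restrict W).Nondegenerate) : (ω.restrict (ω.orthogonal W)).Nondegenerate := by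
  rw [restrict_nondegenerate_iff_isCompl_orthogonal hω, orthogonal_orthogonal hnd hω]
  exact (isCompl_orthogonal_of_restrict_nondegenerate hω hW).symm

theorem IsAlt.exists_isSymplecticFamily [FiniteDimensional K V] (hω : ω.IsAlt)
    (hnd : ω.Nondegenerate) :
    ∃ (n : ℕ) (b : Fin n ⊕ Fin n → V), IsSymplecticFamily ω b ∧ finrank K V = 2 * n := by
  induction hk : finrank K V using Nat.strong_induction_on generalizing V with
  | _ k ih =>
  rcases subsingleton_or_nontrivial V with hV | hV
  · exact ⟨0, Sum.elim finZeroElim finZeroElim, ⟨nofun, nofun, nofun⟩,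
      by simp [← hk, finrank_zero_of_subsingleton]⟩
  obtain ⟨u, hu⟩ := exists_ne (0 : V)
  obtain ⟨v, huv⟩ := hnd.exists_apply_eq_one hu
  set W := ω.orthogonal (span K {u, v})
  have hP := hω.nondegenerate_restrict_span_pair huv
  have hW : finrank K W + 2 = k := by
    rw [← hk, ← hω.finrank_span_pair huv, add_comm]
    exact finrank_add_eq_of_isCompl (isCompl_orthogonal_of_restrict_nondegenerate hω.isRefl hP)
  obtain ⟨m, b, hb, hm⟩ := ih _ (by omega) (ω := ω.restrict W) (fun x => hω x)
    (nondegenerate_restrict_orthogonal hω.isRefl hnd hP) rfl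
  refine ⟨m + 1, _, hb.subtype.cons hω huv (fun k => (b k).2 u ?_) (fun k => (b k).2 v ?_),
    by omega⟩
  all_goals exact subset_span (by simp)

end LinearMap.BilinForm

/-- A finite-dimensional symplectic vector space (a space with an alternating nondegenerate
bilinear form) has even dimension `2 * n` and admits a symplectic (Darboux) basis
`e₁, …, e_n, f₁, …, f_n` with `ω (e i) (f j) = δ_{ij}`, `ω (e i) (e j) = 0`, and
`ω (f i) (f j) = 0`. -/
theorem symplectic_space_even_dim_and_darboux_basis {F : Type*} [Field F]
    {V : Type*} [AddCommGroup V] [Module F V] [FiniteDimensional F V]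
    (ω : V →ₗ[F] V →ₗ[F] F)
    (halt : ∀ v : V, ω v v = 0)
    (hnd : ∀ u : V, (∀ v : V, ω u v = 0) → u = 0) :
    ∃ n : ℕ, Module.finrank F V = 2 * n ∧
      ∃ b : Module.Basis (Fin n ⊕ Fin n) F V,
        (∀ i j, ω (b (Sum.inl i)) (b (Sum.inr j)) = if i = j then 1 else 0) ∧
        (∀ i j, ω (b (Sum.inl i)) (b (Sum.inl j)) = 0) ∧
        (∀ i j, ω (b (Sum.inr i)) (b (Sum.inr j)) = 0) := by
  have hω : LinearMap.BilinForm.IsAlt ω := halt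
  obtain ⟨n, b, hb, hn⟩ := hω.exists_isSymplecticFamily
    ((LinearMap.IsRefl.nondegenerate_iff_separatingLeft hω.isRefl).mpr hnd)
  have hcard : Fintype.card (Fin n ⊕ Fin n) = finrank F V := by simp [hn, two_mul]
  refine ⟨n, hn, basisOfLinearIndependentOfCardEqFinrank' b (hb.linearIndependent hω) hcard,
    ?_⟩
  simp only [coe_basisOfLinearIndependentOfCardEqFinrank']
  exact ⟨hb.inl_inr, hb.inl_inl, hb.inr_inr⟩
end

section
/- For every natural number m ≥ 1 and every real number p with 0 < p < 1/2, it holds that 1 - p < ∑_{j=0}^{m} (Nat.choose (2*m+1) j : ℝ) * p^j * (1-p)^(2*m+1-j). -/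
/-!
With `q = 1 - p` and `X ~ Bin(2m, p)` the first `2m` bits, Pascal's rule gives
`P(success) = q·P(X ≤ m) + p·P(X < m)`. Since `1 = P(X < m) + P(X = m) + P(X > m)`, the claim
`q < P(success)` reduces to `q·P(X > m) < p·P(X < m)`. Reflecting `i ↦ 2m - i` turns `P(X > m)`
into `∑_{i<m} C(2m,i) q^i p^(2m-i)`, and the inequality then holds termwise because
`q^(i+1) p^(2m-i) < p^(i+1) q^(2m-i)` for `i < m` when `p < q`.
-/

open Finset

theorem choose_succ_mul_pow_mul_pow_sub {R : Type*} [CommSemiring R] (p q : R) (n k : ℕ) :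
    (n.choose (k + 1) : R) * p ^ (k + 1) * q ^ (n - k) =
      q * ((n.choose (k + 1) : R) * p ^ (k + 1) * q ^ (n - (k + 1))) := by
  rcases le_or_gt (k + 1) n with h | h
  · rw [show n - k = n - (k + 1) + 1 by omega, pow_succ]
    ring
  · simp [Nat.choose_eq_zero_of_lt h]

theorem sum_range_choose_succ_mul_pow {R : Type*} [CommSemiring R] (p q : R) (n k : ℕ) :
    ∑ j ∈ range (k + 1), ((n + 1).choose j : R) * p ^ j * q ^ (n + 1 - j) =
      q * ∑ j ∈ range (k + 1), (n.choose j : R) * p ^ j * q ^ (n - j) +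
        p * ∑ j ∈ range k, (n.choose j : R) * p ^ j * q ^ (n - j) := by
  induction k with
  | zero => simp [pow_succ, mul_comm]
  | succ k ih =>
    rw [sum_range_succ, ih, sum_range_succ _ (k + 1), sum_range_succ _ k, Nat.choose_succ_succ',
      Nat.add_sub_add_right, Nat.cast_add, add_mul, add_mul, choose_succ_mul_pow_mul_pow_sub]
    ring

theorem add_pow_eq_sum_range_add_sum_range_reflect {R : Type*} [CommSemiring R] (p q : R)
    {n k l : ℕ} (h : k + l = n) :
    (p + q) ^ n = ∑ i ∈ range (l + 1), (n.choose i : R) * p ^ i * q ^ (n - i) +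
      ∑ i ∈ range k, (n.choose i : R) * q ^ i * p ^ (n - i) := by
  rw [add_pow, show n + 1 = (l + 1) + k by omega, sum_range_add,
    ← sum_range_reflect (fun i ↦ (n.choose i : R) * q ^ i * p ^ (n - i))]
  congr 1
  · exact sum_congr rfl fun i _ ↦ by ring
  · refine sum_congr rfl fun j hj ↦ ?_
    have hj : j < k := mem_range.mp hj
    rw [Nat.choose_symm_of_eq_add (show n = (l + 1 + j) + (k - 1 - j) by omega),
      show n - (k - 1 - j) = l + 1 + j by omega, show n - (l + 1 + j) = k - 1 - j by omega]
    ring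

theorem pow_mul_pow_lt_pow_mul_pow {p q : ℝ} (hp : 0 < p) (hpq : p < q) {i j : ℕ} (hij : i < j) :
    q ^ i * p ^ j < p ^ i * q ^ j := by
  obtain ⟨d, rfl⟩ := Nat.exists_eq_add_of_lt hij
  have hpow : p ^ (d + 1) < q ^ (d + 1) := pow_lt_pow_left₀ hpq hp.le d.succ_ne_zero
  have hpq_pos : 0 < p ^ i * q ^ i := by have := hp.trans hpq; positivity
  calc q ^ i * p ^ (i + d + 1) = (p ^ i * q ^ i) * p ^ (d + 1) := by ring
    _ < (p ^ i * q ^ i) * q ^ (d + 1) := by gcongr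
    _ = p ^ i * q ^ (i + d + 1) := by ring

theorem mul_sum_range_choose_reflect_lt {p q : ℝ} (hp : 0 < p) (hpq : p < q) {n k : ℕ}
    (hk : 0 < k) (hkn : 2 * k ≤ n) :
    q * ∑ i ∈ range k, (n.choose i : ℝ) * q ^ i * p ^ (n - i) <
      p * ∑ i ∈ range k, (n.choose i : ℝ) * p ^ i * q ^ (n - i) := by
  rw [mul_sum, mul_sum]
  refine sum_lt_sum_of_nonempty (nonempty_range_iff.mpr hk.ne') fun i hi ↦ ?_
  have hi : i < k := mem_range.mp hi
  have hchoose : (0 : ℝ) < n.choose i := by exact_mod_cast Nat.choose_pos (by omega)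
  have hterm := mul_lt_mul_of_pos_left
    (pow_mul_pow_lt_pow_mul_pow hp hpq (show i + 1 < n - i by omega)) hchoose
  rw [pow_succ, pow_succ] at hterm
  linarith

/-- The classical repetition code of length `2m+1` has error threshold `1/2`: for
`0 < p < 1/2`, the success probability under majority voting exceeds `1 - p`, i.e.
`1 - p < ∑_{j=0}^{m} C(2m+1, j) p^j (1-p)^(2m+1-j)`. -/
theorem repetition_code_threshold (m : ℕ) (hm : 1 ≤ m) (p : ℝ)
    (hp0 : 0 < p) (hp : p < 1 / 2) :
    1 - p < ∑ j ∈ Finset.range (m + 1),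
      (Nat.choose (2 * m + 1) j : ℝ) * p ^ j * (1 - p) ^ (2 * m + 1 - j) := by
  set q := 1 - p
  have hsplit := add_pow_eq_sum_range_add_sum_range_reflect p q (two_mul m).symm
  rw [show p + q = 1 by ring, one_pow, sum_range_succ] at hsplit
  have hlt := mul_sum_range_choose_reflect_lt hp0 (show p < q by linarith) hm le_rfl
  rw [sum_range_choose_succ_mul_pow, sum_range_succ]
  linear_combination hlt + q * hsplit
end

section
/- Let n : ℕ and let φ, ψ ∈ EuclideanSpace ℂ (Fin n) be unit vectors. Then (1/4) * ‖φ ⊗ ψ + ψ ⊗ φ‖^2 - (1/4) * ‖φ ⊗ ψ - ψ ⊗ φ‖^2 = ‖⟪φ, ψ⟫‖^2, i.e., the expected value of the Pauli-Z observable on the ancilla qubit of the swap test equals the fidelity |⟨φ|ψ⟩|². -/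
lemma inner_tensorProd {n : ℕ} (a b c d : EuclideanSpace ℂ (Fin n)) :
    inner ℂ (tensorProd a b) (tensorProd c d) = inner ℂ a c * inner ℂ b d := by
  simp only [PiLp.inner_apply, tensorProd, Fintype.sum_prod_type, Finset.sum_mul_sum,
    RCLike.inner_apply, map_mul, mul_mul_mul_comm]

lemma re_inner_tensorProd_swap {n : ℕ} (φ ψ : EuclideanSpace ℂ (Fin n)) :
    (inner ℂ (tensorProd φ ψ) (tensorProd ψ φ)).re = ‖inner ℂ φ ψ‖ ^ 2 := by
  rw [inner_tensorProd, ← inner_conj_symm ψ φ, Complex.mul_conj, Complex.normSq_eq_norm_sq,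
    Complex.ofReal_re]

theorem swap_test_fidelity_general (n : ℕ) (φ ψ : EuclideanSpace ℂ (Fin n)) :
    (1 / 4 : ℝ) * ‖tensorProd φ ψ + tensorProd ψ φ‖ ^ 2
      - (1 / 4 : ℝ) * ‖tensorProd φ ψ - tensorProd ψ φ‖ ^ 2
      = ‖(inner ℂ φ ψ : ℂ)‖ ^ 2 := by
  rw [← re_inner_tensorProd_swap, ← RCLike.re_to_complex,
    re_inner_eq_norm_add_mul_self_sub_norm_sub_mul_self_div_four]
  ring

/-- The swap test computes the fidelity: for unit vectors `φ, ψ`, the expected value of the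
Pauli-`Z` observable on the ancilla, namely
`(1/4)‖φ⊗ψ + ψ⊗φ‖² - (1/4)‖φ⊗ψ - ψ⊗φ‖²`, equals `‖⟪φ, ψ⟫‖²`. -/
theorem swap_test_fidelity (n : ℕ) (φ ψ : EuclideanSpace ℂ (Fin n))
    (hφ : ‖φ‖ = 1) (hψ : ‖ψ‖ = 1) :
    (1 / 4 : ℝ) * ‖tensorProd φ ψ + tensorProd ψ φ‖ ^ 2
      - (1 / 4 : ℝ) * ‖tensorProd φ ψ - tensorProd ψ φ‖ ^ 2
      = ‖(inner ℂ φ ψ : ℂ)‖ ^ 2 :=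
  swap_test_fidelity_general n φ ψ
end
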